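/- arXiv:2211.14761 — 7 statements merged into one kernel-verified Lean document; each statement's English description precedes it below -/
import Mathlib

section
/- Define D4(x0,x1,x2,x3) = ((x0+x2)^2 - (x1+x3)^2) * ((x0-x2)^2 + (x1-x3)^2). For any integers k, l, m, n: if k + m ≢ l + n (mod 2) then D4(2k+1, 2l+1, 2m+1, 2n+1) is 2^4 times an odd integer; if (k+m)(l+n) ≡ -1 (mod 4) then it is 2^7 times an odd integer; otherwise 2^9 divides it. -/
def D4 (x0 x1 x2 x3 : ℤ) : ℤ :=
  ((x0 + x2)^2 - (x1 + x3)^2) * ((x0 - x2)^2 + (x1 - x3)^2)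

lemma aux_mul4_eq3 (x y : ℤ) (hx : 0 ≤ x) (hx4 : x < 4) (hy : 0 ≤ y) (hy4 : y < 4)
    (h : x * y % 4 = 3) : (x = 1 ∧ y = 3) ∨ (x = 3 ∧ y = 1) := by
  interval_cases x <;> interval_cases y <;> omega

lemma aux_mul4_ne3 (x y : ℤ) (hx : 0 ≤ x) (hx4 : x < 4) (hy : 0 ≤ y) (hy4 : y < 4)
    (hx2 : x % 2 = 1) (hy2 : y % 2 = 1) (h : ¬ x * y % 4 = 3) : x = y := by
  interval_cases x <;> interval_cases y <;> omega

theorem D4_all_odd_two_adic (k l m n : ℤ) :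
    (¬ (k + m ≡ l + n [ZMOD 2]) →
      ∃ t : ℤ, Odd t ∧ D4 (2*k + 1) (2*l + 1) (2*m + 1) (2*n + 1) = 2^4 * t) ∧
    ((k + m) * (l + n) ≡ -1 [ZMOD 4] →
      ∃ t : ℤ, Odd t ∧ D4 (2*k + 1) (2*l + 1) (2*m + 1) (2*n + 1) = 2^7 * t) ∧
    ((k + m ≡ l + n [ZMOD 2]) → ¬ ((k + m) * (l + n) ≡ -1 [ZMOD 4]) →
      (2^9 : ℤ) ∣ D4 (2*k + 1) (2*l + 1) (2*m + 1) (2*n + 1)) := by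
  have key : D4 (2*k + 1) (2*l + 1) (2*m + 1) (2*n + 1)
      = 16 * ((k + m - l - n) * (k + m + l + n + 2) * ((k - m)^2 + (l - n)^2)) := by
    unfold D4; ring
  refine ⟨?_, ?_, ?_⟩
  · intro h
    have h' : ¬ ((k + m) % 2 = (l + n) % 2) := h
    refine ⟨(k + m - l - n) * (k + m + l + n + 2) * ((k - m)^2 + (l - n)^2), ?_, by
      rw [key]; ring⟩
    rcases Int.even_or_odd (k - m) with hp | hp
    · obtain ⟨s, hs⟩ := hp
      obtain ⟨t, ht⟩ : Odd (l - n) := by rw [Int.odd_iff]; omega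
      refine Odd.mul (Odd.mul ?_ ?_) ?_
      · rw [Int.odd_iff]; omega
      · rw [Int.odd_iff]; omega
      · exact ⟨2*s^2 + 2*t^2 + 2*t, by rw [hs, ht]; ring⟩
    · obtain ⟨s, hs⟩ := hp
      obtain ⟨t, ht⟩ : Even (l - n) := by rw [Int.even_iff]; omega
      refine Odd.mul (Odd.mul ?_ ?_) ?_
      · rw [Int.odd_iff]; omega
      · rw [Int.odd_iff]; omega
      · exact ⟨2*s^2 + 2*s + 2*t^2, by rw [hs, ht]; ring⟩
  · intro h
    have h' : ((k + m) * (l + n)) % 4 = 3 := by simpa [Int.ModEq] using h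
    have hmod : ((k + m) % 4) * ((l + n) % 4) % 4 = 3 := by
      rw [← Int.mul_emod]; exact h'
    have h4 := aux_mul4_eq3 ((k + m) % 4) ((l + n) % 4)
      (Int.emod_nonneg _ (by norm_num)) (Int.emod_lt_of_pos _ (by norm_num))
      (Int.emod_nonneg _ (by norm_num)) (Int.emod_lt_of_pos _ (by norm_num)) hmod
    obtain ⟨u, hu, huo⟩ : ∃ u, k + m - l - n = 2 * u ∧ u % 2 = 1 :=
      ⟨(k + m - l - n) / 2, by omega, by omega⟩
    obtain ⟨v, hv, hvo⟩ : ∃ v, k + m + l + n + 2 = 2 * v ∧ v % 2 = 1 :=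
      ⟨(k + m + l + n + 2) / 2, by omega, by omega⟩
    obtain ⟨s, hs⟩ : Odd (k - m) := by rw [Int.odd_iff]; omega
    obtain ⟨t, ht⟩ : Odd (l - n) := by rw [Int.odd_iff]; omega
    refine ⟨u * v * (2*s^2 + 2*s + 2*t^2 + 2*t + 1), ?_, ?_⟩
    · exact Odd.mul (Odd.mul (Int.odd_iff.mpr huo) (Int.odd_iff.mpr hvo))
        ⟨s^2 + s + t^2 + t, by ring⟩
    · rw [key, hs, ht, hu, hv]; ring
  · intro h1 h2
    have h1' : (k + m) % 2 = (l + n) % 2 := h1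
    rcases Int.even_or_odd (k + m) with ha | ha
    · rw [Int.even_iff] at ha
      obtain ⟨s, hs⟩ : Even (k - m) := by rw [Int.even_iff]; omega
      obtain ⟨t, ht⟩ : Even (l - n) := by rw [Int.even_iff]; omega
      rcases Int.even_or_odd ((k + m - l - n) / 2) with hc | hc
      · rw [Int.even_iff] at hc
        obtain ⟨u, hu⟩ : ∃ u, k + m - l - n = 4 * u := ⟨(k + m - l - n) / 4, by omega⟩
        obtain ⟨v, hv⟩ : ∃ v, k + m + l + n + 2 = 2 * v := ⟨(k + m + l + n + 2) / 2, by omega⟩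
        exact ⟨u * v * (s^2 + t^2), by rw [key, hs, ht, hu, hv]; ring⟩
      · rw [Int.odd_iff] at hc
        obtain ⟨u, hu⟩ : ∃ u, k + m - l - n = 2 * u := ⟨(k + m - l - n) / 2, by omega⟩
        obtain ⟨v, hv⟩ : ∃ v, k + m + l + n + 2 = 4 * v := ⟨(k + m + l + n + 2) / 4, by omega⟩
        exact ⟨u * v * (s^2 + t^2), by rw [key, hs, ht, hu, hv]; ring⟩
    · rw [Int.odd_iff] at ha
      have h2' : ¬ ((k + m) * (l + n)) % 4 = 3 := by
        intro hc; exact h2 (by simpa [Int.ModEq] using hc)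
      have hmod : ¬ ((k + m) % 4) * ((l + n) % 4) % 4 = 3 := by
        rw [← Int.mul_emod]; exact h2'
      have heq := aux_mul4_ne3 ((k + m) % 4) ((l + n) % 4)
        (Int.emod_nonneg _ (by norm_num)) (Int.emod_lt_of_pos _ (by norm_num))
        (Int.emod_nonneg _ (by norm_num)) (Int.emod_lt_of_pos _ (by norm_num))
        (by omega) (by omega) hmod
      obtain ⟨s, hs⟩ : Odd (k - m) := by rw [Int.odd_iff]; omega
      obtain ⟨t, ht⟩ : Odd (l - n) := by rw [Int.odd_iff]; omega
      obtain ⟨u, hu⟩ : ∃ u, k + m - l - n = 4 * u := ⟨(k + m - l - n) / 4, by omega⟩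
      obtain ⟨v, hv⟩ : ∃ v, k + m + l + n + 2 = 4 * v := ⟨(k + m + l + n + 2) / 4, by omega⟩
      exact ⟨u * v * (2*s^2 + 2*s + 2*t^2 + 2*t + 1), by rw [key, hs, ht, hu, hv]; ring⟩
end

section
/- Define D4(x0,x1,x2,x3) = ((x0+x2)^2 - (x1+x3)^2) * ((x0-x2)^2 + (x1-x3)^2). For any integers k, l, m, n: if (2k+2m+1)(2l+2n+1) ≡ ±3 (mod 8) then D4(2k, 2l, 2m+1, 2n+1) is 2^4 times an odd integer, and if (2k+2m+1)(2l+2n+1) ≡ ±1 (mod 8) then 2^5 divides D4(2k, 2l, 2m+1, 2n+1). -/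
lemma D4_key (a b : ℤ) :
    (((2*a+1)*(2*b+1)) % 8 = 3 ∨ ((2*a+1)*(2*b+1)) % 8 = 5 →
      ∃ s : ℤ, Odd s ∧ (a-b)*(a+b+1) = 2*s) ∧
    (((2*a+1)*(2*b+1)) % 8 = 1 ∨ ((2*a+1)*(2*b+1)) % 8 = 7 →
      (4:ℤ) ∣ (a-b)*(a+b+1)) := by
  rcases Int.even_or_odd (a - b) with ⟨p, hp⟩ | ⟨p, hp⟩
  · rcases Int.even_or_odd p with ⟨p1, hp1⟩ | ⟨p1, hp1⟩
    · -- a - b = 4*p1 : product ≡ 1 mod 8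
      have hb : b = a - 4*p1 := by omega
      subst hb
      obtain ⟨e, he⟩ := Int.even_mul_succ_self (a - 2*p1)
      have he' : ∃ E : ℤ, (2*a+1)*(2*(a - 4*p1)+1) = 8*E + 1 :=
        ⟨e - 2*p1^2, by linear_combination 4*he⟩
      obtain ⟨E, hE⟩ := he'
      refine ⟨fun h => absurd hE (by omega), fun _ => ⟨p1*(a+(a - 4*p1)+1), by ring⟩⟩
    · -- a - b = 4*p1 + 2 : product ≡ 5 mod 8
      have hb : b = a - 4*p1 - 2 := by omega
      subst hb
      obtain ⟨e, he⟩ := Int.even_mul_succ_self (a - 2*p1 - 1)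
      obtain ⟨f, hf⟩ := Int.even_mul_succ_self p1
      have he' : ∃ E : ℤ, (2*a+1)*(2*(a - 4*p1 - 2)+1) = 8*E + 5 :=
        ⟨e - 4*f - 1, by linear_combination 4*he - 16*hf⟩
      obtain ⟨E, hE⟩ := he'
      refine ⟨fun _ => ⟨(2*p1+1)*(2*(a-2*p1-1)+1), ?_, by ring⟩,
        fun h => absurd hE (by omega)⟩
      exact Odd.mul ⟨p1, by ring⟩ ⟨a-2*p1-1, by ring⟩
  · rcases Int.even_or_odd (a - p) with ⟨q1, hq1⟩ | ⟨q1, hq1⟩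
    · -- a + b + 1 = 4*q1 : product ≡ 7 mod 8
      have hA : a = p + 2*q1 := by omega
      have hb : b = a - 2*p - 1 := by omega
      subst hb; subst hA
      obtain ⟨e, he⟩ := Int.even_mul_succ_self p
      have he' : ∃ E : ℤ, (2*(p + 2*q1)+1)*(2*(p + 2*q1 - 2*p - 1)+1) = 8*E + 7 :=
        ⟨2*q1^2 - e - 1, by linear_combination (-4)*he⟩
      obtain ⟨E, hE⟩ := he'
      refine ⟨fun h => absurd hE (by omega),
        fun _ => ⟨(2*p+1)*q1, by ring⟩⟩
    · -- a + b + 1 = 4*q1 + 2 : product ≡ 3 mod 8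
      have hA : a = p + 2*q1 + 1 := by omega
      have hb : b = a - 2*p - 1 := by omega
      subst hb; subst hA
      obtain ⟨e, he⟩ := Int.even_mul_succ_self p
      obtain ⟨f, hf⟩ := Int.even_mul_succ_self q1
      have he' : ∃ E : ℤ, (2*(p + 2*q1 + 1)+1)*(2*(p + 2*q1 + 1 - 2*p - 1)+1) = 8*E + 3 :=
        ⟨4*f - e, by linear_combination (-4)*he + 16*hf⟩
      obtain ⟨E, hE⟩ := he'
      refine ⟨fun _ => ⟨(2*p+1)*(2*q1+1), ?_, by ring⟩,
        fun h => absurd hE (by omega)⟩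
      exact Odd.mul ⟨p, by ring⟩ ⟨q1, by ring⟩

theorem D4_even_even_odd_odd_two_adic (k l m n : ℤ) :
    (((2*k + 2*m + 1) * (2*l + 2*n + 1) ≡ 3 [ZMOD 8] ∨
      (2*k + 2*m + 1) * (2*l + 2*n + 1) ≡ -3 [ZMOD 8]) →
      ∃ t : ℤ, Odd t ∧ D4 (2*k) (2*l) (2*m + 1) (2*n + 1) = 2^4 * t) ∧
    (((2*k + 2*m + 1) * (2*l + 2*n + 1) ≡ 1 [ZMOD 8] ∨
      (2*k + 2*m + 1) * (2*l + 2*n + 1) ≡ -1 [ZMOD 8]) →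
      (2^5 : ℤ) ∣ D4 (2*k) (2*l) (2*m + 1) (2*n + 1)) := by
  set a := k + m with ha
  set b := l + n with hb
  have hkey := D4_key a b
  have hab : (2*k + 2*m + 1) * (2*l + 2*n + 1) = (2*a+1)*(2*b+1) := by
    rw [ha, hb]; ring
  have hc : Odd (2*(k-m)*(k-m-1) + 2*(l-n)*(l-n-1) + 1) :=
    ⟨(k-m)*(k-m-1) + (l-n)*(l-n-1), by ring⟩
  set c := 2*(k-m)*(k-m-1) + 2*(l-n)*(l-n-1) + 1 with hcdef
  have hD : D4 (2*k) (2*l) (2*m + 1) (2*n + 1) = 8 * ((a-b)*(a+b+1)) * c := by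
    rw [D4, ha, hb, hcdef]; ring
  constructor
  · intro h
    have h3 : ((2*a+1)*(2*b+1)) % 8 = 3 ∨ ((2*a+1)*(2*b+1)) % 8 = 5 := by
      rcases h with h | h <;> rw [hab] at h <;> unfold Int.ModEq at h <;> omega
    obtain ⟨s, hs, hpq⟩ := hkey.1 h3
    exact ⟨s * c, hs.mul hc, by rw [hD, hpq]; ring⟩
  · intro h
    have h1 : ((2*a+1)*(2*b+1)) % 8 = 1 ∨ ((2*a+1)*(2*b+1)) % 8 = 7 := by
      rcases h with h | h <;> rw [hab] at h <;> unfold Int.ModEq at h <;> omega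
    obtain ⟨d, hd⟩ := hkey.2 h1
    exact ⟨d * c, by rw [hD, hd]; ring⟩
end

section
/- Let x0, x1, x2, x3 be integers such that (x0+x2)^2 - (x1+x3)^2 has no prime factor congruent to 3 or -3 modulo 8, and suppose x0 + x2 ≡ ±1 (mod 8) and x1 + x3 ≡ ±3 (mod 8). Then (x0+x2)^2 - (x1+x3)^2 = 8(8k-1) for some integer k. -/
private lemma natOddDiv (D : ℤ)
    (hfac : ∀ p : ℕ, p.Prime → (p : ℤ) ∣ D → ¬ (p % 8 = 3 ∨ p % 8 = 5)) :
    ∀ n : ℕ, n % 2 = 1 → (n : ℤ) ∣ D → n % 8 = 1 ∨ n % 8 = 7 := by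
  intro n
  induction n using Nat.strong_induction_on with
  | _ n ih =>
    intro hodd hdvd
    rcases eq_or_ne n 1 with rfl | h1
    · left; rfl
    have hp := Nat.minFac_prime h1
    obtain ⟨m, hm⟩ := Nat.minFac_dvd n
    have hpD : ((n.minFac : ℕ) : ℤ) ∣ D :=
      dvd_trans (Int.natCast_dvd_natCast.mpr (Nat.minFac_dvd n)) hdvd
    have h8 := hfac _ hp hpD
    have hp2 : n.minFac % 2 = 1 := by
      rcases Nat.Prime.eq_two_or_odd hp with h | h
      · exfalso
        have h2 : (2 : ℕ) ∣ n := h ▸ Nat.minFac_dvd n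
        omega
      · exact h
    have hp8 : n.minFac % 8 = 1 ∨ n.minFac % 8 = 7 := by
      have := hp.two_le; omega
    have hmod : n % 2 = n.minFac % 2 * (m % 2) % 2 := by rw [← Nat.mul_mod, ← hm]
    rw [hp2] at hmod
    have hm2 : m % 2 = 1 := by omega
    have hle : 2 * m ≤ n := le_of_le_of_eq (Nat.mul_le_mul_right m hp.two_le) hm.symm
    have hmlt : m < n := by
      rcases Nat.eq_zero_or_pos m with rfl | hpos
      · omega
      · omega
    have hmD : (m : ℤ) ∣ D :=
      dvd_trans (Int.natCast_dvd_natCast.mpr ⟨n.minFac, hm.trans (Nat.mul_comm _ _)⟩) hdvd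
    have hm8 := ih m hmlt hm2 hmD
    have hmul : n % 8 = n.minFac % 8 * (m % 8) % 8 := by rw [← Nat.mul_mod, ← hm]
    rcases hp8 with h | h <;> rcases hm8 with h' | h' <;> rw [h, h'] at hmul <;> omega

private lemma finishA (a b : ℤ)
    (hdvd : ∀ d : ℤ, d ∣ a^2 - b^2 → d % 2 = 1 → d % 8 = 1 ∨ d % 8 = 7)
    (v w : ℤ) (hv : a - b = 2*v) (hw : a + b = 4*w)
    (h : v % 8 = 7 ∧ w % 4 = 1 ∨ v % 8 = 1 ∧ w % 4 = 3) :
    ∃ k : ℤ, a^2 - b^2 = 8 * (8*k - 1) := by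
  have hD : a^2 - b^2 = 8*(v*w) := by linear_combination (a+b)*hv + 2*v*hw
  have hw8 : w % 8 = 1 ∨ w % 8 = 7 := hdvd w ⟨8*v, by rw [hD]; ring⟩ (by omega)
  have hcase : v % 8 = 7 ∧ w % 8 = 1 ∨ v % 8 = 1 ∧ w % 8 = 7 := by omega
  have hu8 : (v*w) % 8 = 7 := by
    rcases hcase with ⟨h1, h2⟩ | ⟨h1, h2⟩ <;> rw [Int.mul_emod, h1, h2] <;> decide
  obtain ⟨u, hu⟩ : ∃ u, v * w = u := ⟨_, rfl⟩
  rw [hu] at hD hu8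
  rw [hD]
  exact ⟨(u+1)/8, by omega⟩

private lemma finishB (a b : ℤ)
    (hdvd : ∀ d : ℤ, d ∣ a^2 - b^2 → d % 2 = 1 → d % 8 = 1 ∨ d % 8 = 7)
    (v w : ℤ) (hv : a + b = 2*v) (hw : a - b = 4*w)
    (h : v % 8 = 7 ∧ w % 4 = 1 ∨ v % 8 = 1 ∧ w % 4 = 3) :
    ∃ k : ℤ, a^2 - b^2 = 8 * (8*k - 1) := by
  have hD : a^2 - b^2 = 8*(v*w) := by linear_combination (a-b)*hv + 2*v*hw
  have hw8 : w % 8 = 1 ∨ w % 8 = 7 := hdvd w ⟨8*v, by rw [hD]; ring⟩ (by omega)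
  have hcase : v % 8 = 7 ∧ w % 8 = 1 ∨ v % 8 = 1 ∧ w % 8 = 7 := by omega
  have hu8 : (v*w) % 8 = 7 := by
    rcases hcase with ⟨h1, h2⟩ | ⟨h1, h2⟩ <;> rw [Int.mul_emod, h1, h2] <;> decide
  obtain ⟨u, hu⟩ : ∃ u, v * w = u := ⟨_, rfl⟩
  rw [hu] at hD hu8
  rw [hD]
  exact ⟨(u+1)/8, by omega⟩

theorem diff_sq_no_pm3_factor_case2 (x0 x1 x2 x3 : ℤ)
    (hfac : ∀ p : ℕ, p.Prime → (p : ℤ) ∣ ((x0 + x2)^2 - (x1 + x3)^2) →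
      ¬ (p % 8 = 3 ∨ p % 8 = 5))
    (h02 : x0 + x2 ≡ 1 [ZMOD 8] ∨ x0 + x2 ≡ -1 [ZMOD 8])
    (h13 : x1 + x3 ≡ 3 [ZMOD 8] ∨ x1 + x3 ≡ -3 [ZMOD 8]) :
    ∃ k : ℤ, (x0 + x2)^2 - (x1 + x3)^2 = 8 * (8*k - 1) := by
  obtain ⟨a, haa⟩ : ∃ a, x0 + x2 = a := ⟨_, rfl⟩
  obtain ⟨b, hbb⟩ : ∃ b, x1 + x3 = b := ⟨_, rfl⟩
  rw [haa] at hfac h02 ⊢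
  rw [hbb] at hfac h13 ⊢
  have hdvd : ∀ d : ℤ, d ∣ a^2 - b^2 → d % 2 = 1 → d % 8 = 1 ∨ d % 8 = 7 := by
    intro d hd hodd
    have h1 : ((d.natAbs : ℕ) : ℤ) ∣ a^2 - b^2 := Int.natAbs_dvd.mpr hd
    have h2 : d.natAbs % 2 = 1 := by omega
    have := natOddDiv (a^2 - b^2) hfac d.natAbs h2 h1
    omega
  have ha8 : a % 8 = 1 ∨ a % 8 = 7 := by
    rcases h02 with h | h <;> have h' := Int.ModEq.eq h <;> omega
  have hb8 : b % 8 = 3 ∨ b % 8 = 5 := by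
    rcases h13 with h | h <;> have h' := Int.ModEq.eq h <;> omega
  have ha16 : a % 16 = 1 ∨ a % 16 = 9 ∨ a % 16 = 7 ∨ a % 16 = 15 := by omega
  have hb16 : b % 16 = 3 ∨ b % 16 = 11 ∨ b % 16 = 5 ∨ b % 16 = 13 := by omega
  rcases ha16 with ha | ha | ha | ha <;> rcases hb16 with hb | hb | hb | hb
  · obtain ⟨v, hv, hv8⟩ : ∃ v, a - b = 2*v ∧ v % 8 = 7 := ⟨(a - b)/2, by omega, by omega⟩
    obtain ⟨w, hw, hw4⟩ : ∃ w, a + b = 4*w ∧ w % 4 = 1 := ⟨(a + b)/4, by omega, by omega⟩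
    exact finishA a b hdvd v w hv hw (Or.inl ⟨hv8, hw4⟩)
  · obtain ⟨v, hv, hv8⟩ : ∃ v, a - b = 2*v ∧ v % 8 = 3 := ⟨(a - b)/2, by omega, by omega⟩
    have h1 : v ∣ a - b := ⟨2, by linarith⟩
    have h2 : (a - b) ∣ a^2 - b^2 := ⟨a + b, by ring⟩
    exact absurd (hdvd v (dvd_trans h1 h2) (by omega)) (by omega)
  · obtain ⟨v, hv, hv8⟩ : ∃ v, a + b = 2*v ∧ v % 8 = 3 := ⟨(a + b)/2, by omega, by omega⟩
    have h1 : v ∣ a + b := ⟨2, by linarith⟩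
    have h2 : (a + b) ∣ a^2 - b^2 := ⟨a - b, by ring⟩
    exact absurd (hdvd v (dvd_trans h1 h2) (by omega)) (by omega)
  · obtain ⟨v, hv, hv8⟩ : ∃ v, a + b = 2*v ∧ v % 8 = 7 := ⟨(a + b)/2, by omega, by omega⟩
    obtain ⟨w, hw, hw4⟩ : ∃ w, a - b = 4*w ∧ w % 4 = 1 := ⟨(a - b)/4, by omega, by omega⟩
    exact finishB a b hdvd v w hv hw (Or.inl ⟨hv8, hw4⟩)
  · obtain ⟨v, hv, hv8⟩ : ∃ v, a - b = 2*v ∧ v % 8 = 3 := ⟨(a - b)/2, by omega, by omega⟩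
    have h1 : v ∣ a - b := ⟨2, by linarith⟩
    have h2 : (a - b) ∣ a^2 - b^2 := ⟨a + b, by ring⟩
    exact absurd (hdvd v (dvd_trans h1 h2) (by omega)) (by omega)
  · obtain ⟨v, hv, hv8⟩ : ∃ v, a - b = 2*v ∧ v % 8 = 7 := ⟨(a - b)/2, by omega, by omega⟩
    obtain ⟨w, hw, hw4⟩ : ∃ w, a + b = 4*w ∧ w % 4 = 1 := ⟨(a + b)/4, by omega, by omega⟩
    exact finishA a b hdvd v w hv hw (Or.inl ⟨hv8, hw4⟩)
  · obtain ⟨v, hv, hv8⟩ : ∃ v, a + b = 2*v ∧ v % 8 = 7 := ⟨(a + b)/2, by omega, by omega⟩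
    obtain ⟨w, hw, hw4⟩ : ∃ w, a - b = 4*w ∧ w % 4 = 1 := ⟨(a - b)/4, by omega, by omega⟩
    exact finishB a b hdvd v w hv hw (Or.inl ⟨hv8, hw4⟩)
  · obtain ⟨v, hv, hv8⟩ : ∃ v, a + b = 2*v ∧ v % 8 = 3 := ⟨(a + b)/2, by omega, by omega⟩
    have h1 : v ∣ a + b := ⟨2, by linarith⟩
    have h2 : (a + b) ∣ a^2 - b^2 := ⟨a - b, by ring⟩
    exact absurd (hdvd v (dvd_trans h1 h2) (by omega)) (by omega)
  · obtain ⟨v, hv, hv8⟩ : ∃ v, a + b = 2*v ∧ v % 8 = 5 := ⟨(a + b)/2, by omega, by omega⟩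
    have h1 : v ∣ a + b := ⟨2, by linarith⟩
    have h2 : (a + b) ∣ a^2 - b^2 := ⟨a - b, by ring⟩
    exact absurd (hdvd v (dvd_trans h1 h2) (by omega)) (by omega)
  · obtain ⟨v, hv, hv8⟩ : ∃ v, a + b = 2*v ∧ v % 8 = 1 := ⟨(a + b)/2, by omega, by omega⟩
    obtain ⟨w, hw, hw4⟩ : ∃ w, a - b = 4*w ∧ w % 4 = 3 := ⟨(a - b)/4, by omega, by omega⟩
    exact finishB a b hdvd v w hv hw (Or.inr ⟨hv8, hw4⟩)
  · obtain ⟨v, hv, hv8⟩ : ∃ v, a - b = 2*v ∧ v % 8 = 1 := ⟨(a - b)/2, by omega, by omega⟩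
    obtain ⟨w, hw, hw4⟩ : ∃ w, a + b = 4*w ∧ w % 4 = 3 := ⟨(a + b)/4, by omega, by omega⟩
    exact finishA a b hdvd v w hv hw (Or.inr ⟨hv8, hw4⟩)
  · obtain ⟨v, hv, hv8⟩ : ∃ v, a - b = 2*v ∧ v % 8 = 5 := ⟨(a - b)/2, by omega, by omega⟩
    have h1 : v ∣ a - b := ⟨2, by linarith⟩
    have h2 : (a - b) ∣ a^2 - b^2 := ⟨a + b, by ring⟩
    exact absurd (hdvd v (dvd_trans h1 h2) (by omega)) (by omega)
  · obtain ⟨v, hv, hv8⟩ : ∃ v, a + b = 2*v ∧ v % 8 = 1 := ⟨(a + b)/2, by omega, by omega⟩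
    obtain ⟨w, hw, hw4⟩ : ∃ w, a - b = 4*w ∧ w % 4 = 3 := ⟨(a - b)/4, by omega, by omega⟩
    exact finishB a b hdvd v w hv hw (Or.inr ⟨hv8, hw4⟩)
  · obtain ⟨v, hv, hv8⟩ : ∃ v, a + b = 2*v ∧ v % 8 = 5 := ⟨(a + b)/2, by omega, by omega⟩
    have h1 : v ∣ a + b := ⟨2, by linarith⟩
    have h2 : (a + b) ∣ a^2 - b^2 := ⟨a - b, by ring⟩
    exact absurd (hdvd v (dvd_trans h1 h2) (by omega)) (by omega)
  · obtain ⟨v, hv, hv8⟩ : ∃ v, a - b = 2*v ∧ v % 8 = 5 := ⟨(a - b)/2, by omega, by omega⟩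
    have h1 : v ∣ a - b := ⟨2, by linarith⟩
    have h2 : (a - b) ∣ a^2 - b^2 := ⟨a + b, by ring⟩
    exact absurd (hdvd v (dvd_trans h1 h2) (by omega)) (by omega)
  · obtain ⟨v, hv, hv8⟩ : ∃ v, a - b = 2*v ∧ v % 8 = 1 := ⟨(a - b)/2, by omega, by omega⟩
    obtain ⟨w, hw, hw4⟩ : ∃ w, a + b = 4*w ∧ w % 4 = 3 := ⟨(a + b)/4, by omega, by omega⟩
    exact finishA a b hdvd v w hv hw (Or.inr ⟨hv8, hw4⟩)
end

section
/- Let u, v be integers with u ≡ ±3 (mod 8) and v ≡ ±3 (mod 8), and suppose u^2 + v^2 has no prime factor congruent to ±3 modulo 8. Then u^2 + v^2 has at least one prime factor p with p ≡ 1 (mod 8) such that p = a^2 + b^2 for integers a, b with a + b ≡ ±3 (mod 8). -/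
/-! Write `u + v i = (1 + i) z` with `z ∈ ℤ[i]`, so that `N z = (u² + v²) / 2 ≡ 1 (mod 8)` and
`re z + im z = v ≡ ±3 (mod 8)`. On Gaussian integers of norm `≡ 1 (mod 8)` the property
`re + im ≡ ±3 (mod 8)` behaves like a character of order two: it holds for a product iff it holds
for exactly one factor. It fails for units and for the inert primes `q ≡ 7 (mod 8)`, so peeling
prime factors off `z` (a descent on the norm) must reach a split prime `a + b i` with it, whose norm
`p = a² + b²` is then a prime `≡ 1 (mod 8)` dividing `u² + v²`. -/

abbrev IsPmThree (x : ZMod 8) : Prop := x = 3 ∨ x = -3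

theorem isPmThree_intCast_iff (x : ℤ) :
    IsPmThree x ↔ x ≡ 3 [ZMOD 8] ∨ x ≡ -3 [ZMOD 8] := by
  have h3 := ZMod.intCast_eq_intCast_iff (a := x) (b := 3) (c := 8)
  have h5 := ZMod.intCast_eq_intCast_iff (a := x) (b := -3) (c := 8)
  push_cast at h3 h5
  exact or_congr h3 h5

theorem sixteen_dvd_sq_sub_nine {u : ℤ} (hu : u ≡ 3 [ZMOD 8] ∨ u ≡ -3 [ZMOD 8]) :
    16 ∣ u ^ 2 - 9 := by
  rcases hu with h | h <;> obtain ⟨k, hk⟩ := h.symm.dvd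
  · exact ⟨k * (4 * k + 3), by linear_combination (u + 3 + 8 * k) * hk⟩
  · exact ⟨k * (4 * k - 3), by linear_combination (u - 3 + 8 * k) * hk⟩

namespace GaussianInt

theorem norm_eq_sq_add_sq (z : GaussianInt) : z.norm = z.re ^ 2 + z.im ^ 2 := by
  rw [Zsqrtd.norm_def]; ring

theorem isPmThree_mul_iff {z w : GaussianInt} (hz : (z.norm : ZMod 8) = 1)
    (hw : (w.norm : ZMod 8) = 1) :
    IsPmThree ((z * w).re + (z * w).im) ↔
      Xor (IsPmThree (z.re + z.im)) (IsPmThree (w.re + w.im)) := by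
  rw [norm_eq_sq_add_sq] at hz hw
  push_cast at hz hw
  simp only [Zsqrtd.re_mul, Zsqrtd.im_mul]
  push_cast
  generalize (z.re : ZMod 8) = a, (z.im : ZMod 8) = b, (w.re : ZMod 8) = c,
    (w.im : ZMod 8) = d at *
  revert a b c d
  decide

theorem isPmThree_of_isPmThree_mul {d w : GaussianInt} (hd : (d.norm : ZMod 8) = 1)
    (hdw : ((d * w).norm : ZMod 8) = 1) (hPd : ¬ IsPmThree (d.re + d.im))
    (hP : IsPmThree ((d * w).re + (d * w).im)) :
    (w.norm : ZMod 8) = 1 ∧ IsPmThree (w.re + w.im) := by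
  rw [Zsqrtd.norm_mul, Int.cast_mul, hd, one_mul] at hdw
  exact ⟨hdw, by simpa [hPd] using (isPmThree_mul_iff hd hdw).1 hP⟩

theorem not_isPmThree_of_norm_eq_one {z : GaussianInt} (h : z.norm = 1) :
    ¬ IsPmThree (z.re + z.im) := by
  obtain ⟨a, b⟩ := z
  rw [norm_eq_sq_add_sq] at h
  obtain ⟨ha₁, ha₂⟩ := abs_le.1 ((sq_le_one_iff_abs_le_one a).1 (by linarith [sq_nonneg b]))
  obtain ⟨hb₁, hb₂⟩ := abs_le.1 ((sq_le_one_iff_abs_le_one b).1 (by linarith [sq_nonneg a]))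
  interval_cases a <;> interval_cases b <;> decide

theorem norm_natCast_of_mod_eight_eq_seven {p : ℕ} (hp : p % 8 = 7) :
    ((p : GaussianInt).norm : ZMod 8) = 1 := by
  have hp7 : (p : ZMod 8) = 7 := by rw [← ZMod.natCast_mod, hp]; rfl
  rw [Zsqrtd.norm_natCast]; push_cast [hp7]; rfl

theorem not_isPmThree_natCast_of_mod_eight_eq_seven {p : ℕ} (hp : p % 8 = 7) :
    ¬ IsPmThree ((p : GaussianInt).re + (p : GaussianInt).im) := by
  have hp7 : (p : ZMod 8) = 7 := by rw [← ZMod.natCast_mod, hp]; rfl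
  simp only [Zsqrtd.re_natCast, Zsqrtd.im_natCast]; push_cast [hp7]; decide

theorem prime_of_natAbs_norm_prime {π : GaussianInt} (h : π.norm.natAbs.Prime) : Prime π := by
  refine Irreducible.prime ⟨fun hu => h.ne_one (Zsqrtd.norm_eq_one_iff.2 hu), fun x y hxy => ?_⟩
  rw [hxy, Zsqrtd.norm_mul, Int.natAbs_mul, Nat.prime_mul_iff] at h
  simp only [← Zsqrtd.norm_eq_one_iff]
  tauto

theorem dvd_or_star_dvd_of_dvd_norm {π z : GaussianInt} (hπ : Prime π)
    (h : π ∣ (z.norm : GaussianInt)) : π ∣ z ∨ star π ∣ z := by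
  rw [Zsqrtd.norm_eq_mul_conj] at h
  refine (hπ.dvd_or_dvd h).imp id fun h' => ?_
  simpa only [starRingEnd_apply, star_star] using map_dvd (starRingEnd GaussianInt) h'

theorem exists_norm_eq_dvd_of_dvd_norm {p : ℕ} [Fact p.Prime] (hp : p % 4 ≠ 3) {z : GaussianInt}
    (h : (p : ℤ) ∣ z.norm) : ∃ π : GaussianInt, π.norm = p ∧ π ∣ z := by
  obtain ⟨a, b, hab⟩ := Nat.Prime.sq_add_sq hp
  set π : GaussianInt := ⟨a, b⟩
  have hπ : π.norm = p := by
    rw [norm_eq_sq_add_sq]; show (a : ℤ) ^ 2 + (b : ℤ) ^ 2 = p; exact_mod_cast hab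
  have hπz : π ∣ (z.norm : GaussianInt) := by
    refine dvd_trans ⟨star π, ?_⟩ (Int.cast_dvd_cast _ _ h)
    simp [← Zsqrtd.norm_eq_mul_conj, hπ]
  have hprime : Prime π := prime_of_natAbs_norm_prime (by simpa [hπ] using Fact.out)
  rcases dvd_or_star_dvd_of_dvd_norm hprime hπz with hd | hd
  · exact ⟨π, hπ, hd⟩
  · exact ⟨star π, by rw [Zsqrtd.norm_conj, hπ], hd⟩

theorem natCast_dvd_of_dvd_norm {p : ℕ} [Fact p.Prime] (hp : p % 4 = 3) {z : GaussianInt}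
    (h : (p : ℤ) ∣ z.norm) : (p : GaussianInt) ∣ z := by
  have hpz : (p : GaussianInt) ∣ (z.norm : GaussianInt) := by
    exact_mod_cast Int.cast_dvd_cast _ _ h
  simpa using dvd_or_star_dvd_of_dvd_norm (prime_of_nat_prime_of_mod_four_eq_three p hp) hpz

theorem exists_isPmThree_prime_dvd_of_isPmThree {z : GaussianInt}
    (hz : (z.norm : ZMod 8) = 1)
    (hfac : ∀ p : ℕ, p.Prime → (p : ℤ) ∣ z.norm → p % 8 = 1 ∨ p % 8 = 7)
    (hP : IsPmThree (z.re + z.im)) :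
    ∃ p : ℕ, p.Prime ∧ p % 8 = 1 ∧
      ∃ π : GaussianInt, π.norm = p ∧ π ∣ z ∧ IsPmThree (π.re + π.im) := by
  induction hn : z.norm.natAbs using Nat.strong_induction_on generalizing z with
  | _ n ih =>
  have hn1 : n ≠ 1 := by
    rintro rfl
    exact not_isPmThree_of_norm_eq_one (by rw [← abs_natCast_norm, hn]; rfl) hP
  have hp : n.minFac.Prime := Nat.minFac_prime hn1
  have : Fact n.minFac.Prime := ⟨hp⟩
  have hpz : (n.minFac : ℤ) ∣ z.norm := by
    rw [← abs_natCast_norm, hn]; exact Int.natCast_dvd_natCast.2 n.minFac_dvd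
  have descend : ∀ d w : GaussianInt, z = d * w → 1 < d.norm.natAbs →
      (d.norm : ZMod 8) = 1 → ¬ IsPmThree (d.re + d.im) → ∃ p : ℕ, p.Prime ∧ p % 8 = 1 ∧
        ∃ π : GaussianInt, π.norm = p ∧ π ∣ z ∧ IsPmThree (π.re + π.im) := by
    rintro d w rfl hd₁ hd hPd
    obtain ⟨hw, hPw⟩ := isPmThree_of_isPmThree_mul hd hz hPd hP
    have hw₀ : 0 < w.norm.natAbs := Int.natAbs_pos.2 fun h => by
      rw [h, Int.cast_zero] at hw; exact absurd hw (by decide)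
    have hlt : w.norm.natAbs < n := by
      rw [← hn, Zsqrtd.norm_mul, Int.natAbs_mul]; exact lt_mul_of_one_lt_left hw₀ hd₁
    have hfacw : ∀ q : ℕ, q.Prime → (q : ℤ) ∣ w.norm → q % 8 = 1 ∨ q % 8 = 7 :=
      fun q hq hqw => hfac q hq (by rw [Zsqrtd.norm_mul]; exact hqw.mul_left _)
    obtain ⟨p, hp, hp8, π, hπ, hπw, hPπ⟩ := ih _ hlt hw hfacw hPw rfl
    exact ⟨p, hp, hp8, π, hπ, hπw.mul_left d, hPπ⟩
  rcases hfac _ hp hpz with h1 | h7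
  · obtain ⟨π, hπ, hπz⟩ := exists_norm_eq_dvd_of_dvd_norm (by omega) hpz
    by_cases hPπ : IsPmThree (π.re + π.im)
    · exact ⟨_, hp, h1, π, hπ, hπz, hPπ⟩
    obtain ⟨w, rfl⟩ := hπz
    refine descend π w rfl (by rw [hπ]; exact hp.one_lt) ?_ hPπ
    rw [hπ, Int.cast_natCast, ← ZMod.natCast_mod, h1]; rfl
  · obtain ⟨w, rfl⟩ := natCast_dvd_of_dvd_norm (by omega) hpz
    refine descend _ w rfl ?_ (norm_natCast_of_mod_eight_eq_seven h7)
      (not_isPmThree_natCast_of_mod_eight_eq_seven h7)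
    rw [Zsqrtd.norm_natCast, Int.natAbs_mul, Int.natAbs_natCast]
    exact Nat.one_lt_mul_iff.2 ⟨hp.pos, hp.pos, Or.inl hp.one_lt⟩

end GaussianInt

theorem sum_sq_pm3_has_special_prime_factor (u v : ℤ)
    (hu : u ≡ 3 [ZMOD 8] ∨ u ≡ -3 [ZMOD 8])
    (hv : v ≡ 3 [ZMOD 8] ∨ v ≡ -3 [ZMOD 8])
    (hfac : ∀ p : ℕ, p.Prime → (p : ℤ) ∣ (u^2 + v^2) →
      ¬ (p % 8 = 3 ∨ p % 8 = 5)) :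
    ∃ p : ℕ, p.Prime ∧ p % 8 = 1 ∧ (p : ℤ) ∣ (u^2 + v^2) ∧
      ∃ a b : ℤ, (p : ℤ) = a^2 + b^2 ∧
        (a + b ≡ 3 [ZMOD 8] ∨ a + b ≡ -3 [ZMOD 8]) := by
  obtain ⟨s, hs⟩ : (2 : ℤ) ∣ u + v := by simp only [Int.ModEq] at hu hv; omega
  set z : GaussianInt := ⟨s, v - s⟩
  have hnorm : u ^ 2 + v ^ 2 = 2 * z.norm := by
    rw [GaussianInt.norm_eq_sq_add_sq]; linear_combination (u - v + 2 * s) * hs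
  obtain ⟨a, ha⟩ := sixteen_dvd_sq_sub_nine hu
  obtain ⟨b, hb⟩ := sixteen_dvd_sq_sub_nine hv
  have hz : z.norm = 8 * (a + b + 1) + 1 := by linarith
  have hz8 : (z.norm : ZMod 8) = 1 := by
    rw [hz]; push_cast; rw [show (8 : ZMod 8) = 0 from rfl]; ring
  have hfacz : ∀ p : ℕ, p.Prime → (p : ℤ) ∣ z.norm → p % 8 = 1 ∨ p % 8 = 7 := by
    intro p hp hpz
    have h35 := hfac p hp (hnorm ▸ dvd_mul_of_dvd_right hpz 2)
    rw [hz] at hpz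
    rcases hp.eq_two_or_odd with rfl | hodd <;> omega
  have hPz : IsPmThree (z.re + z.im) := by simpa [z] using (isPmThree_intCast_iff v).2 hv
  obtain ⟨p, hp, hp8, π, hπ, hπz, hPπ⟩ :=
    GaussianInt.exists_isPmThree_prime_dvd_of_isPmThree hz8 hfacz hPz
  refine ⟨p, hp, hp8, ?_, π.re, π.im, ?_, (isPmThree_intCast_iff _).1 (by push_cast; exact hPπ)⟩
  · rw [hnorm, ← hπ]; exact dvd_mul_of_dvd_right (map_dvd Zsqrtd.normMonoidHom hπz) 2
  · rw [← hπ, GaussianInt.norm_eq_sq_add_sq]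
end

section
/- Let x0, x1, x2, x3 be integers with x0 ≡ x1 ≡ 0 (mod 2), x2 ≡ x3 ≡ 1 (mod 2), (x0+x2)(x1+x3) ≡ ±1 (mod 8), and x0 ≢ x1 (mod 4). Then (x0-x2)^2 + (x1-x3)^2 ≡ -6 (mod 16); consequently ((x0+x2)^2 - (x1+x3)^2)((x0-x2)^2 + (x1-x3)^2) has a prime factor congruent to 5 modulo 8 (i.e., of the form 8k-3). -/
/-!
Write `a = x0 + x2`, `b = x1 + x3`, `u = x0 - x2`, `v = x1 - x3`. Since `a² - u² = 4 x0 x2` and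
`b² - v² = 4 x1 x3`, the parity conditions give `u² + v² ≡ a² + b² + 8 (mod 16)`, with the `8`
coming from `x0 ≢ x1 (mod 4)`. Units of `ℤ/8` are self-inverse, so `ab ≡ ±1 (mod 8)` forces
`a ≡ ±b (mod 8)` and hence `a² + b² ≡ 2 (mod 16)`. Thus `u² + v² = 2n` with `n ≡ 5 (mod 8)` a sum
of two squares. Writing `n = k² m` with `-1` a square modulo `m`, every prime factor of `m` is
`≡ 1 (mod 4)`; if none were `≡ 5 (mod 8)` then `m ≡ 1` and `n ≡ k² (mod 8)`, which is not `5`.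
-/

theorem Nat.ModEq.one_of_forall_prime_dvd {m n : ℕ} (hn : n ≠ 0)
    (h : ∀ p, p.Prime → p ∣ n → p ≡ 1 [MOD m]) : n ≡ 1 [MOD m] := by
  induction n using induction_on_primes with
  | zero => contradiction
  | one => rfl
  | prime_mul p a hp ih =>
    have ha := ih (right_ne_zero_of_mul hn) fun q hq hqa => h q hq (hqa.mul_left p)
    simpa using (h p hp (dvd_mul_right p a)).mul ha

theorem Nat.exists_prime_mod_eight_eq_five_dvd_of_eq_sq_add_sq {n : ℕ} (hn : n % 8 = 5)
    (hsq : ∃ x y : ℕ, n = x ^ 2 + y ^ 2) : ∃ p, p.Prime ∧ p % 8 = 5 ∧ p ∣ n := by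
  obtain ⟨k, m, rfl, hm⟩ := Nat.eq_sq_add_sq_iff_eq_sq_mul.mp hsq
  have hm0 : m ≠ 0 := by
    rintro rfl
    simp at hn
  by_contra! hne
  have hm1 : m ≡ 1 [MOD 8] := by
    refine Nat.ModEq.one_of_forall_prime_dvd hm0 fun p hp hpm => ?_
    have hp4 : p % 4 ≠ 3 := Nat.mod_four_ne_three_of_mem_primeFactors_of_isSquare_neg_one
      (Nat.mem_primeFactors.mpr ⟨hp, hpm, hm0⟩) hm
    have hp2 : p ≠ 2 := by
      rintro rfl
      have := dvd_mul_of_dvd_right hpm (k ^ 2)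
      omega
    have hp5 : p % 8 ≠ 5 := fun h5 => hne p hp h5 (dvd_mul_of_dvd_right hpm _)
    have := hp.eq_two_or_odd
    unfold Nat.ModEq
    omega
  have h5 : ((k ^ 2 * m : ℕ) : ZMod 8) = 5 := by
    rw [← ZMod.natCast_mod, hn]
    rfl
  rw [Nat.cast_mul, Nat.cast_pow, (ZMod.natCast_eq_natCast_iff _ _ _).mpr hm1, Nat.cast_one,
    mul_one] at h5
  exact (by decide : ∀ x : ZMod 8, x ^ 2 ≠ 5) _ h5

theorem Int.exists_prime_mod_eight_eq_five_dvd_sq_add_sq {x y : ℤ}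
    (h : x ^ 2 + y ^ 2 ≡ 10 [ZMOD 16]) :
    ∃ p : ℕ, p.Prime ∧ p % 8 = 5 ∧ (p : ℤ) ∣ x ^ 2 + y ^ 2 := by
  unfold Int.ModEq at h
  obtain ⟨m, hm⟩ : ∃ m : ℕ, 2 * (m : ℤ) = x ^ 2 + y ^ 2 :=
    ⟨((x ^ 2 + y ^ 2) / 2).toNat, by have := add_nonneg (sq_nonneg x) (sq_nonneg y); omega⟩
  obtain ⟨p, hp, hp8, hpm⟩ := Nat.exists_prime_mod_eight_eq_five_dvd_of_eq_sq_add_sq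
    (n := m) (by omega) ⟨((x - y) / 2).natAbs, ((x + y) / 2).natAbs, by
      zify [sq_abs]; exact Int.sq_add_sq_of_two_mul_sq_add_sq hm⟩
  exact ⟨p, hp, hp8, hm ▸ (Int.natCast_dvd_natCast.mpr hpm).mul_left 2⟩

theorem Int.sq_add_sq_modEq_two_of_mul_modEq_one {a b : ℤ} (h : a * b ≡ 1 [ZMOD 8]) :
    a ^ 2 + b ^ 2 ≡ 2 [ZMOD 16] := by
  have hab : a ≡ b [ZMOD 8] := (ZMod.intCast_eq_intCast_iff a b 8).mp <|
    (by decide : ∀ u v : ZMod 8, u * v = 1 → u = v) _ _ <| by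
      exact_mod_cast (ZMod.intCast_eq_intCast_iff (a * b) 1 8).mpr h
  obtain ⟨k, hk⟩ := hab.dvd
  obtain ⟨l, hl⟩ := h.dvd
  exact Int.modEq_iff_dvd.mpr ⟨l - 4 * k ^ 2, by linear_combination 2 * hl - (b - a + 8 * k) * hk⟩

theorem Int.sq_add_sq_modEq_two_of_mul_modEq_one_or_neg_one {a b : ℤ}
    (h : a * b ≡ 1 [ZMOD 8] ∨ a * b ≡ -1 [ZMOD 8]) : a ^ 2 + b ^ 2 ≡ 2 [ZMOD 16] := by
  rcases h with h | h
  · exact Int.sq_add_sq_modEq_two_of_mul_modEq_one h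
  · simpa using Int.sq_add_sq_modEq_two_of_mul_modEq_one (b := -b) (by simpa using h.neg)

theorem D4_has_prime_factor_five_mod_eight (x0 x1 x2 x3 : ℤ)
    (h0 : x0 ≡ 0 [ZMOD 2]) (h1 : x1 ≡ 0 [ZMOD 2])
    (h2 : x2 ≡ 1 [ZMOD 2]) (h3 : x3 ≡ 1 [ZMOD 2])
    (hprod : (x0 + x2) * (x1 + x3) ≡ 1 [ZMOD 8] ∨
             (x0 + x2) * (x1 + x3) ≡ -1 [ZMOD 8])
    (hmod4 : ¬ (x0 ≡ x1 [ZMOD 4])) :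
    (x0 - x2)^2 + (x1 - x3)^2 ≡ -6 [ZMOD 16] ∧
    ∃ p : ℕ, p.Prime ∧ p % 8 = 5 ∧
      (p : ℤ) ∣ ((x0 + x2)^2 - (x1 + x3)^2) * ((x0 - x2)^2 + (x1 - x3)^2) := by
  obtain ⟨k, hk⟩ := (Int.sq_add_sq_modEq_two_of_mul_modEq_one_or_neg_one hprod).dvd
  unfold Int.ModEq at h0 h1 h2 h3 hmod4
  obtain ⟨s, rfl⟩ : ∃ s, x0 = 2 * s := ⟨x0 / 2, by omega⟩
  obtain ⟨t, rfl⟩ : ∃ t, x1 = 2 * t := ⟨x1 / 2, by omega⟩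
  obtain ⟨c, rfl⟩ : ∃ c, x2 = 2 * c + 1 := ⟨x2 / 2, by omega⟩
  obtain ⟨d, rfl⟩ : ∃ d, x3 = 2 * d + 1 := ⟨x3 / 2, by omega⟩
  obtain ⟨j, hj⟩ : ∃ j, s + t = 2 * j + 1 := ⟨(s + t) / 2, by omega⟩
  have hsq : (2 * s - (2 * c + 1)) ^ 2 + (2 * t - (2 * d + 1)) ^ 2 ≡ -6 [ZMOD 16] :=
    Int.modEq_iff_dvd.mpr ⟨k + s * c + t * d + j, by linear_combination hk + 8 * hj⟩
  obtain ⟨p, hp, hp8, hpd⟩ :=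
    Int.exists_prime_mod_eight_eq_five_dvd_sq_add_sq (hsq.trans (by decide))
  exact ⟨hsq, p, hp, hp8, hpd.mul_left _⟩
end

section
/- Every prime p with p ≡ 1 (mod 8) that can be written as p = a^2 + b^2 with a + b ≡ ±3 (mod 8) admits a representation p = (4r)^2 + (4s+1)^2 with integers r, s satisfying r ≢ s (mod 2); consequently 2p = (8k-3)^2 + (8l+3)^2 where k = (r+s+1)/2 and l = (r-s-1)/2. -/
lemma aux_rep (p : ℕ) (hp1 : p % 8 = 1) (a b : ℤ) (hpab : (p : ℤ) = a^2 + b^2)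
    (ha : a % 2 = 0) (hmod : (a + b) % 8 = 3 ∨ (a + b) % 8 = 5) :
    ∃ r s : ℤ, (p : ℤ) = (4*r)^2 + (4*s + 1)^2 ∧ (r + s) % 2 = 1 := by
  have hpz : (p : ℤ) % 8 = 1 := by omega
  obtain ⟨x, hx⟩ : ∃ x, a = 2 * x := ⟨a / 2, by omega⟩
  -- b is odd
  have hb : b % 2 = 1 := by
    rcases Int.emod_two_eq b with h | h
    · exfalso
      obtain ⟨y, hy⟩ : ∃ y, b = 2 * y := ⟨b / 2, by omega⟩
      have : (p : ℤ) = 4 * (x^2 + y^2) := by rw [hpab, hx, hy]; ring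
      generalize x^2 + y^2 = t at this
      omega
    · exact h
  obtain ⟨y, hy⟩ : ∃ y, b = 2 * y + 1 := ⟨b / 2, by omega⟩
  obtain ⟨d, hd⟩ : ∃ d, y^2 + y = 2 * d := by
    have := Int.even_mul_succ_self y
    obtain ⟨d, hd⟩ := this
    exact ⟨d, by nlinarith [hd]⟩
  -- x is even
  have hx2 : x % 2 = 0 := by
    rcases Int.emod_two_eq x with h | h
    · exact h
    · exfalso
      obtain ⟨w, hw⟩ : ∃ w, x = 2 * w + 1 := ⟨x / 2, by omega⟩
      have : (p : ℤ) = 16 * (w^2 + w) + 8 * d + 5 := by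
        rw [hpab, hx, hy, hw]; linear_combination 4 * hd
      generalize w^2 + w = t at this
      omega
  obtain ⟨r, hr⟩ : ∃ r, x = 2 * r := ⟨x / 2, by omega⟩
  rcases Int.emod_two_eq y with h | h
  · -- y even : b = 4s+1
    obtain ⟨s, hs⟩ : ∃ s, y = 2 * s := ⟨y / 2, by omega⟩
    refine ⟨r, s, by rw [hpab, hx, hy, hr, hs]; ring, ?_⟩
    have h8 : (4*r + 4*s + 1) % 8 = 3 ∨ (4*r + 4*s + 1) % 8 = 5 := by
      have : a + b = 4*r + 4*s + 1 := by rw [hx, hy, hr, hs]; ring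
      rw [this] at hmod; exact hmod
    omega
  · -- y odd : b = 4t+3, use s = -t-1
    obtain ⟨t, ht⟩ : ∃ t, y = 2 * t + 1 := ⟨y / 2, by omega⟩
    refine ⟨r, -t - 1, by rw [hpab, hx, hy, hr, ht]; ring, ?_⟩
    have h8 : (4*r + 4*t + 3) % 8 = 3 ∨ (4*r + 4*t + 3) % 8 = 5 := by
      have : a + b = 4*r + 4*t + 3 := by rw [hx, hy, hr, ht]; ring
      rw [this] at hmod; exact hmod
    omega

theorem prime_one_mod_eight_special_representation (p : ℕ) (hp : p.Prime)
    (hp8 : p % 8 = 1)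
    (hab : ∃ a b : ℤ, (p : ℤ) = a^2 + b^2 ∧
      (a + b ≡ 3 [ZMOD 8] ∨ a + b ≡ -3 [ZMOD 8])) :
    ∃ r s : ℤ, (p : ℤ) = (4*r)^2 + (4*s + 1)^2 ∧ ¬ (r ≡ s [ZMOD 2]) ∧
      ∃ k l : ℤ, r + s + 1 = 2*k ∧ r - s - 1 = 2*l ∧
        2 * (p : ℤ) = (8*k - 3)^2 + (8*l + 3)^2 := by
  obtain ⟨a, b, hpab, hmod⟩ := hab
  unfold Int.ModEq at hmod
  have hmod' : (a + b) % 8 = 3 ∨ (a + b) % 8 = 5 := by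
    rcases hmod with h | h
    · left; omega
    · right; omega
  have key : ∃ r s : ℤ, (p : ℤ) = (4*r)^2 + (4*s + 1)^2 ∧ (r + s) % 2 = 1 := by
    rcases Int.emod_two_eq a with h | h
    · exact aux_rep p hp8 a b hpab h hmod'
    · have hb : b % 2 = 0 := by
        rcases Int.emod_two_eq b with h' | h'
        · exact h'
        · exfalso
          obtain ⟨x, hx⟩ : ∃ x, a = 2 * x + 1 := ⟨a / 2, by omega⟩
          obtain ⟨y, hy⟩ : ∃ y, b = 2 * y + 1 := ⟨b / 2, by omega⟩
          have : (p : ℤ) = 2 * (2*x^2 + 2*x + 2*y^2 + 2*y + 1) := by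
            rw [hpab, hx, hy]; ring
          generalize 2*x^2 + 2*x + 2*y^2 + 2*y + 1 = t at this
          omega
      exact aux_rep p hp8 b a (by rw [hpab]; ring) hb (by rw [add_comm b a]; exact hmod')
  obtain ⟨r, s, hps, hpar⟩ := key
  refine ⟨r, s, hps, ?_, ?_⟩
  · unfold Int.ModEq
    omega
  · obtain ⟨k, hk⟩ : ∃ k, r + s + 1 = 2 * k := ⟨(r + s + 1) / 2, by omega⟩
    obtain ⟨l, hl⟩ : ∃ l, r - s - 1 = 2 * l := ⟨(r - s - 1) / 2, by omega⟩
    refine ⟨k, l, hk, hl, ?_⟩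
    have e1 : (8*k - 3 : ℤ) = 4*r + 4*s + 1 := by omega
    have e2 : (8*l + 3 : ℤ) = 4*r - 4*s - 1 := by omega
    rw [hps, e1, e2]; ring
end

section
/- Let D4(x0,x1,x2,x3) = ((x0+x2)^2-(x1+x3)^2)((x0-x2)^2+(x1-x3)^2). Suppose b, c, d, e ∈ ℤ^4 with all coordinates even, coordinate-wise sums b_i + c_i + d_i + e_i ≡ 0 (mod 4) for each i, and each of D4(b), D4(c), D4(d), D4(e) lies in 2^4·(odd integers). Then D4(b)·D4(c)·D4(d)·D4(e) ≡ 2^16 (mod 2^18), i.e., the product equals 2^16(4m+1) for some integer m. -/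
lemma even_sq4 (x : ℤ) (h : Even x) : x^2 ≡ 0 [ZMOD 4] := by
  obtain ⟨k, rfl⟩ := h
  exact Int.modEq_iff_dvd.mpr ⟨-(k^2), by ring⟩

lemma odd_sq4 (x : ℤ) (h : Odd x) : x^2 ≡ 1 [ZMOD 4] := by
  obtain ⟨k, rfl⟩ := h
  exact Int.modEq_iff_dvd.mpr ⟨-(k^2) - k, by ring⟩

lemma key (a0 a1 a2 a3 : ℤ) (h : Odd (D4 a0 a1 a2 a3)) :
    (D4 a0 a1 a2 a3 ≡ 1 [ZMOD 4] ∧ (a1 + a3) % 2 = 0) ∨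
    (D4 a0 a1 a2 a3 ≡ 3 [ZMOD 4] ∧ (a1 + a3) % 2 = 1) := by
  rcases Int.even_or_odd (a0 + a2) with hs | hs <;>
    rcases Int.even_or_odd (a1 + a3) with ht | ht
  · exfalso
    obtain ⟨p, hp⟩ := hs; obtain ⟨q, hq⟩ := ht
    have : Even (D4 a0 a1 a2 a3) := by
      unfold D4
      exact (by exact ⟨2*p^2 - 2*q^2, by rw [hp, hq]; ring⟩ :
        Even ((a0+a2)^2 - (a1+a3)^2)).mul_right _
    exact (Int.not_odd_iff_even.mpr this) h
  · -- a0+a2 even, a1+a3 odd : D4 ≡ 3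
    have h1 := even_sq4 _ hs
    have h2 := odd_sq4 _ ht
    have h3 : (a0 - a2)^2 ≡ 0 [ZMOD 4] := by
      obtain ⟨p, hp⟩ := hs
      exact even_sq4 _ ⟨p - a2, by omega⟩
    have h4 : (a1 - a3)^2 ≡ 1 [ZMOD 4] := by
      obtain ⟨q, hq⟩ := ht
      exact odd_sq4 _ ⟨q - a3, by omega⟩
    have := (h1.sub h2).mul (h3.add h4)
    exact Or.inr ⟨this.trans (by decide), Int.odd_iff.mp ht⟩
  · -- a0+a2 odd, a1+a3 even : D4 ≡ 1
    have h1 := odd_sq4 _ hs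
    have h2 := even_sq4 _ ht
    have h3 : (a0 - a2)^2 ≡ 1 [ZMOD 4] := by
      obtain ⟨p, hp⟩ := hs
      exact odd_sq4 _ ⟨p - a2, by omega⟩
    have h4 : (a1 - a3)^2 ≡ 0 [ZMOD 4] := by
      obtain ⟨q, hq⟩ := ht
      exact even_sq4 _ ⟨q - a3, by omega⟩
    have := (h1.sub h2).mul (h3.add h4)
    exact Or.inl ⟨this.trans (by decide), Int.even_iff.mp ht⟩
  · exfalso
    obtain ⟨p, hp⟩ := hs; obtain ⟨q, hq⟩ := ht
    have : Even (D4 a0 a1 a2 a3) := by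
      unfold D4
      exact (by exact ⟨2*p^2 + 2*p - 2*q^2 - 2*q, by rw [hp, hq]; ring⟩ :
        Even ((a0+a2)^2 - (a1+a3)^2)).mul_right _
    exact (Int.not_odd_iff_even.mpr this) h

theorem product_of_four_D4_mod (b0 b1 b2 b3 c0 c1 c2 c3 d0 d1 d2 d3 e0 e1 e2 e3 : ℤ)
    (hb0 : 2 ∣ b0) (hb1 : 2 ∣ b1) (hb2 : 2 ∣ b2) (hb3 : 2 ∣ b3)
    (hc0 : 2 ∣ c0) (hc1 : 2 ∣ c1) (hc2 : 2 ∣ c2) (hc3 : 2 ∣ c3)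
    (hd0 : 2 ∣ d0) (hd1 : 2 ∣ d1) (hd2 : 2 ∣ d2) (hd3 : 2 ∣ d3)
    (he0 : 2 ∣ e0) (he1 : 2 ∣ e1) (he2 : 2 ∣ e2) (he3 : 2 ∣ e3)
    (hs0 : b0 + c0 + d0 + e0 ≡ 0 [ZMOD 4]) (hs1 : b1 + c1 + d1 + e1 ≡ 0 [ZMOD 4])
    (hs2 : b2 + c2 + d2 + e2 ≡ 0 [ZMOD 4]) (hs3 : b3 + c3 + d3 + e3 ≡ 0 [ZMOD 4])
    (hDb : ∃ t : ℤ, Odd t ∧ D4 b0 b1 b2 b3 = 2^4 * t)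
    (hDc : ∃ t : ℤ, Odd t ∧ D4 c0 c1 c2 c3 = 2^4 * t)
    (hDd : ∃ t : ℤ, Odd t ∧ D4 d0 d1 d2 d3 = 2^4 * t)
    (hDe : ∃ t : ℤ, Odd t ∧ D4 e0 e1 e2 e3 = 2^4 * t) :
    D4 b0 b1 b2 b3 * D4 c0 c1 c2 c3 * D4 d0 d1 d2 d3 * D4 e0 e1 e2 e3 ≡
      2^16 [ZMOD 2^18] ∧
    ∃ m : ℤ, D4 b0 b1 b2 b3 * D4 c0 c1 c2 c3 * D4 d0 d1 d2 d3 * D4 e0 e1 e2 e3 =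
      2^16 * (4*m + 1) := by
  obtain ⟨kb0, rfl⟩ := hb0; obtain ⟨kb1, rfl⟩ := hb1
  obtain ⟨kb2, rfl⟩ := hb2; obtain ⟨kb3, rfl⟩ := hb3
  obtain ⟨kc0, rfl⟩ := hc0; obtain ⟨kc1, rfl⟩ := hc1
  obtain ⟨kc2, rfl⟩ := hc2; obtain ⟨kc3, rfl⟩ := hc3
  obtain ⟨kd0, rfl⟩ := hd0; obtain ⟨kd1, rfl⟩ := hd1
  obtain ⟨kd2, rfl⟩ := hd2; obtain ⟨kd3, rfl⟩ := hd3
  obtain ⟨ke0, rfl⟩ := he0; obtain ⟨ke1, rfl⟩ := he1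
  obtain ⟨ke2, rfl⟩ := he2; obtain ⟨ke3, rfl⟩ := he3
  have hDb16 : D4 (2*kb0) (2*kb1) (2*kb2) (2*kb3) = 16 * D4 kb0 kb1 kb2 kb3 := by
    simp only [D4]; ring
  have hDc16 : D4 (2*kc0) (2*kc1) (2*kc2) (2*kc3) = 16 * D4 kc0 kc1 kc2 kc3 := by
    simp only [D4]; ring
  have hDd16 : D4 (2*kd0) (2*kd1) (2*kd2) (2*kd3) = 16 * D4 kd0 kd1 kd2 kd3 := by
    simp only [D4]; ring
  have hDe16 : D4 (2*ke0) (2*ke1) (2*ke2) (2*ke3) = 16 * D4 ke0 ke1 ke2 ke3 := by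
    simp only [D4]; ring
  have oddb : Odd (D4 kb0 kb1 kb2 kb3) := by
    obtain ⟨t, ht, htx⟩ := hDb; rw [hDb16] at htx
    have : D4 kb0 kb1 kb2 kb3 = t := by omega
    rwa [this]
  have oddc : Odd (D4 kc0 kc1 kc2 kc3) := by
    obtain ⟨t, ht, htx⟩ := hDc; rw [hDc16] at htx
    have : D4 kc0 kc1 kc2 kc3 = t := by omega
    rwa [this]
  have oddd : Odd (D4 kd0 kd1 kd2 kd3) := by
    obtain ⟨t, ht, htx⟩ := hDd; rw [hDd16] at htx
    have : D4 kd0 kd1 kd2 kd3 = t := by omega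
    rwa [this]
  have odde : Odd (D4 ke0 ke1 ke2 ke3) := by
    obtain ⟨t, ht, htx⟩ := hDe; rw [hDe16] at htx
    have : D4 ke0 ke1 ke2 ke3 = t := by omega
    rwa [this]
  have hX : D4 kb0 kb1 kb2 kb3 * D4 kc0 kc1 kc2 kc3 * D4 kd0 kd1 kd2 kd3 *
      D4 ke0 ke1 ke2 ke3 ≡ 1 [ZMOD 4] := by
    simp only [Int.ModEq] at hs1 hs3
    rcases key _ _ _ _ oddb with ⟨hb, pb⟩ | ⟨hb, pb⟩ <;>
      rcases key _ _ _ _ oddc with ⟨hc, pc⟩ | ⟨hc, pc⟩ <;>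
        rcases key _ _ _ _ oddd with ⟨hd, pd⟩ | ⟨hd, pd⟩ <;>
          rcases key _ _ _ _ odde with ⟨he, pe⟩ | ⟨he, pe⟩ <;>
            first
              | exact (((hb.mul hc).mul hd).mul he).trans (by decide)
              | (exfalso; omega)
  obtain ⟨w, hw⟩ := Int.modEq_iff_dvd.mp hX
  have hm : D4 kb0 kb1 kb2 kb3 * D4 kc0 kc1 kc2 kc3 * D4 kd0 kd1 kd2 kd3 *
      D4 ke0 ke1 ke2 ke3 = 4 * (-w) + 1 := by omega
  constructor
  · rw [hDb16, hDc16, hDd16, hDe16]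
    exact Int.modEq_iff_dvd.mpr ⟨w, by linear_combination (16:ℤ)^4 * hw⟩
  · exact ⟨-w, by rw [hDb16, hDc16, hDd16, hDe16]; linear_combination (65536:ℤ) * hm⟩
end
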